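/- For r,b ∈ ℕ, the hypergeometric distribution H_{2,r,b} (number of red balls in 2 draws without replacement from an urn with r red and b blue balls) equals the convolution B_{q+ε} ∗ B_{q−ε} of two Bernoulli laws, where q = r/(r+b) and ε = (1/(r+b))·√(rb/(r+b−1)). -/

import Mathlib

open MeasureTheory

noncomputable def bern (p : ℝ) : Measure ℝ :=
  (ENNReal.ofReal (1 - p)) • Measure.dirac 0 + (ENNReal.ofReal p) • Measure.dirac 1

noncomputable def charFun' (μ : Measure ℝ) (t : ℝ) : ℂ :=
  ∫ x, Complex.exp (Complex.I * t * x) ∂μ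

noncomputable def cumulant (r : ℕ) (μ : Measure ℝ) : ℂ :=
  Complex.I ^ (-(r : ℤ)) * iteratedDeriv r (fun t : ℝ => Complex.log (charFun' μ t)) 0

noncomputable def mconv (μ ν : Measure ℝ) : Measure ℝ :=
  (μ.prod ν).map (fun x => x.1 + x.2)

noncomputable def BC : (n : ℕ) → (Fin n → ℝ) → Measure ℝ
  | 0, _ => Measure.dirac 0
  | (n+1), p => mconv (BC n (fun i => p i.castSucc)) (bern (p (Fin.last n)))

def S {I : Type*} [Fintype I] (r : ℕ) (x : I → ℝ) : ℝ := ∑ i, x i ^ r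

def E {I : Type*} [Fintype I] [DecidableEq I] (k : ℕ) (x : I → ℝ) : ℝ :=
  ∑ J ∈ Finset.univ.powersetCard k, ∏ i ∈ J, x i

noncomputable def binomLaw : ℕ → ℝ → Measure ℝ
  | 0, _ => Measure.dirac 0
  | (m+1), q => mconv (binomLaw m q) (bern q)

noncomputable def convFin : (k : ℕ) → (Fin k → Measure ℝ) → Measure ℝ
  | 0, _ => Measure.dirac 0
  | (k+1), μ => mconv (convFin k (fun j => μ j.castSucc)) (μ (Fin.last k))

/-- The hypergeometric law H_{2,r,b} assigning probability C(r,k)C(b,2−k)/C(r+b,2)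
to k ∈ {0,1,2}. -/
noncomputable def hyp2 (r b : ℕ) : Measure ℝ :=
  (ENNReal.ofReal ((r.choose 0 * b.choose 2 : ℝ) / ((r + b).choose 2))) • Measure.dirac 0 +
  (ENNReal.ofReal ((r.choose 1 * b.choose 1 : ℝ) / ((r + b).choose 2))) • Measure.dirac 1 +
  (ENNReal.ofReal ((r.choose 2 * b.choose 0 : ℝ) / ((r + b).choose 2))) • Measure.dirac 2

lemma prod_smul_left (c : ENNReal) (μ ν : Measure ℝ) [SFinite ν] :
    (c • μ).prod ν = c • μ.prod ν := by
  ext s hs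
  rw [Measure.prod_apply hs, Measure.smul_apply, Measure.prod_apply hs,
    lintegral_smul_measure, smul_eq_mul]

lemma prod_smul_right (c : ENNReal) (hc : c ≠ ⊤) (μ ν : Measure ℝ) [SFinite ν] :
    μ.prod (c • ν) = c • μ.prod ν := by
  ext s hs
  rw [Measure.prod_apply hs, Measure.smul_apply, Measure.prod_apply hs, smul_eq_mul,
    ← lintegral_const_mul' _ _ hc]
  simp

lemma bern_conv (a c : ℝ) : mconv (bern a) (bern c) =
  (ENNReal.ofReal (1-c) * ENNReal.ofReal (1-a)) • Measure.dirac 0 +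
  ((ENNReal.ofReal (1-c) * ENNReal.ofReal a + ENNReal.ofReal c * ENNReal.ofReal (1-a)) • Measure.dirac 1 +
  (ENNReal.ofReal c * ENNReal.ofReal a) • Measure.dirac (2:ℝ)) := by
  have hm : Measurable (fun x : ℝ × ℝ => x.1 + x.2) := by fun_prop
  unfold mconv bern
  rw [Measure.prod_add, Measure.add_prod, Measure.add_prod]
  simp only [prod_smul_left, prod_smul_right _ ENNReal.ofReal_ne_top,
    Measure.dirac_prod_dirac, Measure.map_add _ _ hm, Measure.map_smul,
    Measure.map_dirac' hm, smul_smul]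
  rw [add_smul]
  norm_num
  abel


/-- H_{2,r,b} = B_{q+ε} ∗ B_{q−ε} with q = r/(r+b), ε = (1/(r+b))·√(rb/(r+b−1)). -/
theorem hypergeometric_two_is_bernoulli_convolution (r b : ℕ) (hr : 0 < r) (hb : 0 < b) :
    hyp2 r b =
      mconv
        (bern ((r : ℝ) / (r + b) + (1 / (r + b : ℝ)) * Real.sqrt ((r * b : ℝ) / ((r : ℝ) + b - 1))))
        (bern ((r : ℝ) / (r + b) - (1 / (r + b : ℝ)) * Real.sqrt ((r * b : ℝ) / ((r : ℝ) + b - 1)))) := by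
  set N : ℝ := (r : ℝ) + b with hN
  set e : ℝ := (1 / (r + b : ℝ)) * Real.sqrt ((r * b : ℝ) / ((r : ℝ) + b - 1)) with he
  have hr1 : (1:ℝ) ≤ r := by exact_mod_cast hr
  have hb1 : (1:ℝ) ≤ b := by exact_mod_cast hb
  have hN2 : (2:ℝ) ≤ N := by rw [hN]; linarith
  have hN0 : N ≠ 0 := by linarith
  have hNm1 : (0:ℝ) < N - 1 := by linarith
  have hNm10 : N - 1 ≠ 0 := ne_of_gt hNm1
  have hx0 : (0:ℝ) ≤ (r * b : ℝ) / ((r : ℝ) + b - 1) :=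
    div_nonneg (by positivity) (by rw [← hN] at *; linarith)
  have he0 : 0 ≤ e := by
    rw [he]; exact mul_nonneg (by positivity) (Real.sqrt_nonneg _)
  have he2 : e ^ 2 = (r * b : ℝ) / (N ^ 2 * (N - 1)) := by
    rw [he, mul_pow, Real.sq_sqrt hx0, ← hN]
    field_simp
  set q : ℝ := (r : ℝ) / (r + b) with hq
  have hqN : q = (r:ℝ)/N := rfl
  have hq0 : 0 ≤ q := by positivity
  have key1 : (b:ℝ) ≤ (r:ℝ) * (N - 1) := by
    rw [hN]
    nlinarith [mul_nonneg (sub_nonneg.2 hr1) (sub_nonneg.2 hb1), sq_nonneg ((r:ℝ)-1)]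
  have key2 : (r:ℝ) ≤ (b:ℝ) * (N - 1) := by
    rw [hN]
    nlinarith [mul_nonneg (sub_nonneg.2 hr1) (sub_nonneg.2 hb1), sq_nonneg ((b:ℝ)-1)]
  have heq : e ≤ q := by
    have h2 : e ^ 2 ≤ q ^ 2 := by
      rw [he2, hqN, div_pow, div_le_div_iff₀ (by positivity) (by positivity)]
      nlinarith [mul_le_mul_of_nonneg_left key1 (show (0:ℝ) ≤ (r:ℝ) * N^2 by positivity)]
    calc e = Real.sqrt (e ^ 2) := (Real.sqrt_sq he0).symm
      _ ≤ Real.sqrt (q ^ 2) := Real.sqrt_le_sqrt h2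
      _ = q := Real.sqrt_sq hq0
  have heq' : e ≤ 1 - q := by
    have h1q : 1 - q = (b:ℝ)/N := by rw [hqN]; field_simp; linarith [hN]
    have h2 : e ^ 2 ≤ (1 - q) ^ 2 := by
      rw [he2, h1q, div_pow, div_le_div_iff₀ (by positivity) (by positivity)]
      nlinarith [mul_le_mul_of_nonneg_left key2 (show (0:ℝ) ≤ (b:ℝ) * N^2 by positivity)]
    calc e = Real.sqrt (e ^ 2) := (Real.sqrt_sq he0).symm
      _ ≤ Real.sqrt ((1-q) ^ 2) := Real.sqrt_le_sqrt h2
      _ = 1 - q := Real.sqrt_sq (by rw [h1q]; positivity)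
  have hp1le : q + e ≤ 1 := by linarith
  have hp2ge : 0 ≤ q - e := by linarith
  have hp1ge : 0 ≤ q + e := by linarith
  have hp2le : q - e ≤ 1 := by linarith
  -- cast identities
  have hc2 : ((r+b).choose 2 : ℝ) = N * (N - 1) / 2 := by
    rw [Nat.cast_choose_two]; push_cast; rw [← hN]
  have hcb : (b.choose 2 : ℝ) = (b:ℝ) * ((b:ℝ) - 1) / 2 := by
    rw [Nat.cast_choose_two]
  have hcr : (r.choose 2 : ℝ) = (r:ℝ) * ((r:ℝ) - 1) / 2 := by
    rw [Nat.cast_choose_two]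
  have hN0' : ((r:ℝ) + b) ≠ 0 := by rw [← hN]; exact hN0
  have hNm10' : ((r:ℝ) + b - 1) ≠ 0 := by
    have := hNm10; rw [hN] at this; exact this
  have A0 : ((r.choose 0 * b.choose 2 : ℝ) / ((r + b).choose 2)) = (1-(q-e))*(1-(q+e)) := by
    have : (1-(q-e))*(1-(q+e)) = (1-q)^2 - e^2 := by ring
    rw [this, he2, hqN, Nat.choose_zero_right, hcb, hc2]
    push_cast
    rw [hN]
    field_simp
    ring
  have A1 : ((r.choose 1 * b.choose 1 : ℝ) / ((r + b).choose 2))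
      = (1-(q-e))*(q+e) + (q-e)*(1-(q+e)) := by
    have : (1-(q-e))*(q+e) + (q-e)*(1-(q+e)) = 2*q - 2*(q^2 - e^2) := by ring
    rw [this, he2, hqN, Nat.choose_one_right, Nat.choose_one_right, hc2]
    push_cast
    rw [hN]
    field_simp
    ring
  have A2 : ((r.choose 2 * b.choose 0 : ℝ) / ((r + b).choose 2)) = (q-e)*(q+e) := by
    have : (q-e)*(q+e) = q^2 - e^2 := by ring
    rw [this, he2, hqN, Nat.choose_zero_right, hcr, hc2]
    push_cast
    rw [hN]
    field_simp
    ring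
  rw [bern_conv]
  unfold hyp2
  rw [A0, A1, A2, ENNReal.ofReal_mul (by linarith), ENNReal.ofReal_add
      (mul_nonneg (by linarith) hp1ge) (mul_nonneg hp2ge (by linarith)),
    ENNReal.ofReal_mul (by linarith), ENNReal.ofReal_mul hp2ge,
    ENNReal.ofReal_mul hp2ge, add_assoc]
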